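/- arXiv:2507.01613 — 2 statements merged into one kernel-verified Lean document; each statement's English description precedes it below -/
import Mathlib

section
/- Fix an integer K ≥ 2. For every random variable X supported on {1,…,K} with positive variance, SNR(X) := (E X)²/Var(X) ≥ 4K/(K−1)², with equality if and only if X takes value 1 with probability K/(K+1) and value K with probability 1/(K+1). -/
/-!
For `a ≤ x ≤ b` one has `x² ≤ (a + b) x - a b`, so a distribution on `[a, b]` with mean `m` has
second moment at most `(a + b) m - a b` (Bhatia–Davis), with equality exactly when it is carried
by `{a, b}`. Plugging this into the variance, the inequality `SNR ≥ 4ab/(b - a)²` becomes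
`((a + b) m - 2ab)² ≥ 0`. Equality therefore forces the support into `{1, K}` and the mean to be
`2K/(K + 1)`, which pins down the two weights.
-/

open Finset

/-- The signal-to-noise ratio of a distribution with first moment `m₁` and second moment `m₂`. -/
noncomputable def snr (m₁ m₂ : ℝ) : ℝ := m₁ ^ 2 / (m₂ - m₁ ^ 2)

section BhatiaDavis

variable {ι : Type*} {s : Finset ι} {p x : ι → ℝ} {a b : ℝ}

theorem sum_sub_mul_sub_mul_eq (hp : ∑ i ∈ s, p i = 1) :
    ∑ i ∈ s, (b - x i) * (x i - a) * p i
      = (a + b) * ∑ i ∈ s, x i * p i - a * b - ∑ i ∈ s, x i ^ 2 * p i := by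
  calc ∑ i ∈ s, (b - x i) * (x i - a) * p i
      = ∑ i ∈ s, ((a + b) * (x i * p i) - a * b * p i - x i ^ 2 * p i) :=
        sum_congr rfl fun i _ ↦ by ring
    _ = _ := by rw [sum_sub_distrib, sum_sub_distrib, ← mul_sum, ← mul_sum, hp, mul_one]

theorem sub_mul_sub_mul_nonneg_of_mem_Icc (hp0 : ∀ i ∈ s, 0 ≤ p i) (hx : ∀ i ∈ s, x i ∈ Set.Icc a b) :
    ∀ i ∈ s, 0 ≤ (b - x i) * (x i - a) * p i := fun i hi ↦
  mul_nonneg (mul_nonneg (sub_nonneg.2 (hx i hi).2) (sub_nonneg.2 (hx i hi).1)) (hp0 i hi)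

theorem sum_sq_mul_le_of_mem_Icc (hp0 : ∀ i ∈ s, 0 ≤ p i) (hp : ∑ i ∈ s, p i = 1)
    (hx : ∀ i ∈ s, x i ∈ Set.Icc a b) :
    ∑ i ∈ s, x i ^ 2 * p i ≤ (a + b) * ∑ i ∈ s, x i * p i - a * b := by
  have := sum_nonneg (sub_mul_sub_mul_nonneg_of_mem_Icc hp0 hx)
  rw [sum_sub_mul_sub_mul_eq hp] at this
  linarith

theorem sum_sq_mul_eq_iff_of_mem_Icc (hp0 : ∀ i ∈ s, 0 ≤ p i) (hp : ∑ i ∈ s, p i = 1)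
    (hx : ∀ i ∈ s, x i ∈ Set.Icc a b) :
    ∑ i ∈ s, x i ^ 2 * p i = (a + b) * ∑ i ∈ s, x i * p i - a * b ↔
      ∀ i ∈ s, x i ≠ a → x i ≠ b → p i = 0 := by
  rw [eq_comm, ← sub_eq_zero, ← sum_sub_mul_sub_mul_eq hp,
    sum_eq_zero_iff_of_nonneg (sub_mul_sub_mul_nonneg_of_mem_Icc hp0 hx)]
  refine forall₂_congr fun i _ ↦ ?_
  simp only [mul_eq_zero, sub_eq_zero, ne_eq]
  tauto

end BhatiaDavis

section Snr

variable {a b m₁ m₂ : ℝ}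

theorem snr_sub_eq (hab : a ≠ b) (hvar : m₂ - m₁ ^ 2 ≠ 0) :
    snr m₁ m₂ - 4 * a * b / (b - a) ^ 2
      = (((a + b) * m₁ - 2 * a * b) ^ 2 + 4 * a * b * ((a + b) * m₁ - a * b - m₂))
        / ((b - a) ^ 2 * (m₂ - m₁ ^ 2)) := by
  have : b - a ≠ 0 := sub_ne_zero.2 hab.symm
  unfold snr
  field_simp
  ring

theorem le_snr_of_le (ha : 0 < a) (hab : a < b) (hvar : 0 < m₂ - m₁ ^ 2)
    (hm₂ : m₂ ≤ (a + b) * m₁ - a * b) :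
    4 * a * b / (b - a) ^ 2 ≤ snr m₁ m₂ := by
  rw [← sub_nonneg, snr_sub_eq hab.ne hvar.ne']
  have : 0 < b := ha.trans hab
  have := pow_pos (sub_pos.2 hab) 2
  positivity

theorem snr_eq_iff (ha : 0 < a) (hab : a < b) (hvar : 0 < m₂ - m₁ ^ 2)
    (hm₂ : m₂ ≤ (a + b) * m₁ - a * b) :
    snr m₁ m₂ = 4 * a * b / (b - a) ^ 2 ↔ m₂ = (a + b) * m₁ - a * b ∧ (a + b) * m₁ = 2 * a * b := by
  have hb : 0 < b := ha.trans hab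
  have hden : (b - a) ^ 2 * (m₂ - m₁ ^ 2) ≠ 0 := by
    have := sub_ne_zero.2 hab.ne'
    positivity
  have hslack : 0 ≤ 4 * a * b * ((a + b) * m₁ - a * b - m₂) := by
    have := sub_nonneg.2 hm₂
    positivity
  rw [← sub_eq_zero, snr_sub_eq hab.ne hvar.ne', div_eq_zero_iff, or_iff_left hden,
    add_eq_zero_iff_of_nonneg (sq_nonneg _) hslack]
  simp only [pow_eq_zero_iff two_ne_zero, mul_eq_zero, four_ne_zero, ha.ne', hb.ne', or_false,
    false_or, sub_eq_zero, eq_comm (a := m₂)]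
  exact and_comm

end Snr

theorem two_point_mean_eq_iff {a b q r : ℝ} (hab : a ≠ b) (hsum : a + b ≠ 0) (hqr : q + r = 1) :
    (a + b) * (a * q + b * r) = 2 * a * b ↔ q = b / (a + b) ∧ r = a / (a + b) := by
  obtain rfl : r = 1 - q := by linarith
  constructor
  · intro h
    have hq : q = b / (a + b) := by
      field_simp
      apply mul_left_cancel₀ (sub_ne_zero.2 hab)
      linear_combination h
    refine ⟨hq, ?_⟩
    rw [hq]
    field_simp
    ring
  · rintro ⟨rfl, -⟩
    field_simp
    ring

/-- For `K ≥ 2` and any random variable supported on `{1, …, K}`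
(described by its probability mass `p`) with positive variance,
`SNR(X) = (E X)²/Var(X) ≥ 4K/(K−1)²`, with equality if and only if `X` takes
value `1` with probability `K/(K+1)` and value `K` with probability `1/(K+1)`. -/
theorem min_snr_unconstrained
    (K : ℕ) (hK : 2 ≤ K) (p : ℕ → ℝ)
    (hp0 : ∀ k ∈ Finset.Icc 1 K, 0 ≤ p k)
    (hp1 : (∑ k ∈ Finset.Icc 1 K, p k) = 1)
    (hvar : 0 < (∑ k ∈ Finset.Icc 1 K, (k : ℝ) ^ 2 * p k)
        - (∑ k ∈ Finset.Icc 1 K, (k : ℝ) * p k) ^ 2) :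
    4 * (K : ℝ) / ((K : ℝ) - 1) ^ 2
      ≤ (∑ k ∈ Finset.Icc 1 K, (k : ℝ) * p k) ^ 2 /
          ((∑ k ∈ Finset.Icc 1 K, (k : ℝ) ^ 2 * p k)
            - (∑ k ∈ Finset.Icc 1 K, (k : ℝ) * p k) ^ 2) ∧
    ((∑ k ∈ Finset.Icc 1 K, (k : ℝ) * p k) ^ 2 /
          ((∑ k ∈ Finset.Icc 1 K, (k : ℝ) ^ 2 * p k)
            - (∑ k ∈ Finset.Icc 1 K, (k : ℝ) * p k) ^ 2)
        = 4 * (K : ℝ) / ((K : ℝ) - 1) ^ 2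
      ↔ (p 1 = (K : ℝ) / ((K : ℝ) + 1) ∧ p K = 1 / ((K : ℝ) + 1) ∧
          ∀ k ∈ Finset.Icc 1 K, k ≠ 1 → k ≠ K → p k = 0)) := by
  have hK1 : (1 : ℝ) < K := by exact_mod_cast hK
  have hx : ∀ k ∈ Icc 1 K, (k : ℝ) ∈ Set.Icc 1 (K : ℝ) := fun k hk ↦ by
    obtain ⟨h1, h2⟩ := mem_Icc.1 hk
    exact ⟨by exact_mod_cast h1, by exact_mod_cast h2⟩
  have hm₂ := sum_sq_mul_le_of_mem_Icc hp0 hp1 hx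
  have hle := le_snr_of_le one_pos hK1 hvar hm₂
  have heq := snr_eq_iff one_pos hK1 hvar hm₂
  rw [sum_sq_mul_eq_iff_of_mem_Icc hp0 hp1 hx] at heq
  simp only [snr, mul_one, ne_eq, Nat.cast_eq_one, Nat.cast_inj] at hle heq
  refine ⟨hle, ?_⟩
  rw [heq, and_comm, ← and_assoc]
  refine and_congr_left fun hsupp ↦ ?_
  have hne : (1 : ℕ) ≠ K := by omega
  have h1 : 1 ∈ Icc 1 K := mem_Icc.2 ⟨le_rfl, by omega⟩
  have hKmem : K ∈ Icc 1 K := mem_Icc.2 ⟨by omega, le_rfl⟩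
  have hmass : p 1 + p K = 1 := by
    rw [← hp1, sum_eq_add_of_mem 1 K h1 hKmem hne fun k hk h ↦ hsupp k hk h.1 h.2]
  have hmean : ∑ k ∈ Icc 1 K, (k : ℝ) * p k = 1 * p 1 + K * p K := by
    rw [sum_eq_add_of_mem 1 K h1 hKmem hne fun k hk h ↦ by rw [hsupp k hk h.1 h.2, mul_zero],
      Nat.cast_one]
  have hweights := two_point_mean_eq_iff hK1.ne (by positivity) hmass
  rw [mul_one, add_comm (1 : ℝ)] at hweights
  rwa [hmean, add_comm (1 : ℝ)]
end

section
/- Fix an integer K ≥ 2. Among all random variables X supported on {1,…,K} with non-increasing probability mass function (P(X=1) ≥ P(X=2) ≥ … ≥ P(X=K)) and positive variance, the signal-to-noise ratio satisfies SNR(X) = (E X)²/Var(X) ≥ 24(K+1)/(4K² − 4K + 1), with equality if and only if P(X = 1) = (2K² + K + 2)/(2K² + 5K) and P(X = k) = 2(2K−1)/(K(K−1)(2K+5)) for every k ∈ {2,…,K}. -/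
/-!
`SNR(X) ≥ c` means `μ² - c Var ≥ 0`, and for every `m`
`μ² - c Var = (1 + c) (μ - m)² + ∑ₖ pₖ φ(k)` with `φ(k) = k² - (1 + c) (k - m)²`.
Summation by parts turns `∑ₖ pₖ φ(k)` into `∑_{j < K} (pⱼ - pⱼ₊₁) Φ(j) + p_K Φ(K)`, where `Φ`
is the partial sum of `φ`. For `c` the claimed bound and `m = 4 (K + 1) / (2 K + 5)` (the mean
of the extremal law) one gets `Φ(j) = c/3 · j (j - 1) (K - j)`, which is `0` at `j = 1` and
`j = K` and positive in between; so all terms are nonnegative when `p` is non-increasing.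
Equality forces `μ = m` and `pⱼ = pⱼ₊₁` for `2 ≤ j < K`, and these conditions together with
`∑ p = 1` pin down the law.
-/

open Finset

theorem sum_Icc_one_by_parts {R : Type*} [CommRing R] (q f : ℕ → R) (n : ℕ) :
    ∑ k ∈ Icc 1 (n + 1), q k * f k =
      ∑ j ∈ Icc 1 n, (q j - q (j + 1)) * ∑ k ∈ Icc 1 j, f k
        + q (n + 1) * ∑ k ∈ Icc 1 (n + 1), f k := by
  induction n with
  | zero => simp
  | succ n ih =>
    rw [sum_Icc_succ_top (b := n + 1) (by omega) (fun k => q k * f k), ih,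
      sum_Icc_succ_top (b := n) (by omega) (fun j => (q j - q (j + 1)) * ∑ k ∈ Icc 1 j, f k),
      sum_Icc_succ_top (b := n + 1) (by omega) f]
    ring

theorem sum_Icc_one_mul_eq_of_eqOn_Icc_two {R : Type*} [CommRing R] (f p : ℕ → R) {q : R}
    {n : ℕ} (hn : 1 ≤ n) (hq : ∀ k ∈ Icc 2 n, p k = q) :
    ∑ k ∈ Icc 1 n, f k * p k = f 1 * (p 1 - q) + q * ∑ k ∈ Icc 1 n, f k := by
  rw [← insert_Icc_add_one_left_eq_Icc hn, sum_insert (by simp), sum_insert (by simp),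
    sum_congr rfl fun k hk => by rw [hq k hk], ← sum_mul]
  ring

theorem sum_Icc_one_natCast (n : ℕ) : ∑ k ∈ Icc 1 n, (k : ℝ) = n * (n + 1) / 2 := by
  induction n with
  | zero => simp
  | succ n ih =>
    rw [sum_Icc_succ_top (by omega), ih]
    push_cast
    ring

theorem forall_mem_Icc_eq_left_iff {α : Type*} (f : ℕ → α) (a b : ℕ) :
    (∀ k ∈ Icc a b, f k = f a) ↔ ∀ j ∈ Ico a b, f (j + 1) = f j := by
  constructor
  · intro h j hj
    simp only [mem_Ico] at hj
    rw [h j (by simp; omega), h (j + 1) (by simp; omega)]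
  · intro h k hk
    simp only [mem_Icc] at hk
    induction k, hk.1 using Nat.le_induction with
    | base => rfl
    | succ k hak ih => rw [h k (by simp; omega), ih ⟨hak, by omega⟩]

/-- The partial sum is a cubic in `j` with leading coefficient `-c / 3` vanishing at `j = 0`;
`h₁` makes it vanish at `j = 1` and then `hK` makes it vanish at `j = K`. -/
theorem sum_Icc_one_sq_sub_mul_sub_sq {c m K : ℝ} (hK : c * (2 * K + 5) = 6 * (1 + c) * m)
    (h₁ : c = (1 + c) * m * (2 - m)) (j : ℕ) :
    ∑ k ∈ Icc 1 j, ((k : ℝ) ^ 2 - (1 + c) * (k - m) ^ 2) = c / 3 * j * (j - 1) * (K - j) := by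
  induction j with
  | zero => simp
  | succ j ih =>
    rw [sum_Icc_succ_top (by omega), ih]
    push_cast
    linear_combination -(j / 3 : ℝ) * hK - h₁

noncomputable section

def snrBound (K : ℕ) : ℝ := 24 * ((K : ℝ) + 1) / (4 * (K : ℝ) ^ 2 - 4 * (K : ℝ) + 1)

def extremalMean (K : ℕ) : ℝ := 4 * ((K : ℝ) + 1) / (2 * K + 5)

def pmfMean (p : ℕ → ℝ) (K : ℕ) : ℝ := ∑ k ∈ Icc 1 K, (k : ℝ) * p k

def pmfVariance (p : ℕ → ℝ) (K : ℕ) : ℝ :=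
  ∑ k ∈ Icc 1 K, (k : ℝ) ^ 2 * p k - pmfMean p K ^ 2

end

theorem two_mul_natCast_sub_one_ne_zero (K : ℕ) : (2 * K - 1 : ℝ) ≠ 0 := by
  rw [sub_ne_zero]
  exact_mod_cast (by omega : 2 * K ≠ 1)

theorem snrBound_eq (K : ℕ) : snrBound K = 24 * (K + 1) / (2 * K - 1) ^ 2 := by
  rw [snrBound]
  ring

theorem one_add_snrBound (K : ℕ) : 1 + snrBound K = ((2 * K + 5) / (2 * K - 1)) ^ 2 := by
  rw [snrBound_eq, one_add_div (pow_ne_zero 2 (two_mul_natCast_sub_one_ne_zero K)), div_pow]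
  ring

theorem snrBound_pos (K : ℕ) : 0 < snrBound K := by
  have := two_mul_natCast_sub_one_ne_zero K
  rw [snrBound_eq]
  positivity

theorem snrBound_mul_two_mul_add_five (K : ℕ) :
    snrBound K * (2 * K + 5) = 6 * (1 + snrBound K) * extremalMean K := by
  have hden : (2 * K + 5 : ℝ) ≠ 0 := by positivity
  rw [one_add_snrBound, snrBound_eq, extremalMean]
  field_simp
  ring

theorem snrBound_eq_one_add_mul_extremalMean (K : ℕ) :
    snrBound K = (1 + snrBound K) * extremalMean K * (2 - extremalMean K) := by
  have hden : (2 * K + 5 : ℝ) ≠ 0 := by positivity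
  rw [one_add_snrBound, snrBound_eq, extremalMean]
  field_simp
  ring

section

variable {p : ℕ → ℝ} {K : ℕ}

theorem sq_pmfMean_sub_mul_pmfVariance_eq (hp1 : ∑ k ∈ Icc 1 K, p k = 1) (c m : ℝ) :
    pmfMean p K ^ 2 - c * pmfVariance p K =
      (1 + c) * (pmfMean p K - m) ^ 2 +
        ∑ k ∈ Icc 1 K, p k * ((k : ℝ) ^ 2 - (1 + c) * (k - m) ^ 2) := by
  have hsum : ∑ k ∈ Icc 1 K, p k * ((k : ℝ) ^ 2 - (1 + c) * (k - m) ^ 2) =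
      -c * ∑ k ∈ Icc 1 K, (k : ℝ) ^ 2 * p k + 2 * (1 + c) * m * pmfMean p K
        - (1 + c) * m ^ 2 * ∑ k ∈ Icc 1 K, p k := by
    simp only [pmfMean, mul_sum, ← sum_add_distrib, ← sum_sub_distrib]
    exact sum_congr rfl fun k _ => by ring
  rw [hsum, hp1, pmfVariance]
  ring

theorem sq_pmfMean_sub_snrBound_mul_pmfVariance_eq (hK : 1 ≤ K)
    (hp1 : ∑ k ∈ Icc 1 K, p k = 1) :
    pmfMean p K ^ 2 - snrBound K * pmfVariance p K =
      (1 + snrBound K) * (pmfMean p K - extremalMean K) ^ 2 +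
        ∑ j ∈ Icc 1 (K - 1), (p j - p (j + 1)) * (snrBound K / 3 * j * (j - 1) * (K - j)) := by
  obtain ⟨n, rfl⟩ : ∃ n, K = n + 1 := ⟨K - 1, by omega⟩
  rw [sq_pmfMean_sub_mul_pmfVariance_eq hp1 _ (extremalMean (n + 1)), sum_Icc_one_by_parts p]
  simp only [sum_Icc_one_sq_sub_mul_sub_sq (snrBound_mul_two_mul_add_five _)
    (snrBound_eq_one_add_mul_extremalMean _), sub_self, mul_zero, add_zero, Nat.add_sub_cancel]

theorem snrBound_div_three_mul_pos {j : ℕ} (hj : 2 ≤ j) (hjK : j < K) :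
    0 < snrBound K / 3 * j * (j - 1) * (K - j) := by
  have hj' : (2 : ℝ) ≤ j := by exact_mod_cast hj
  have hjK' : (j : ℝ) < K := by exact_mod_cast hjK
  have := snrBound_pos K
  apply mul_pos (mul_pos (mul_pos _ _) _) <;> linarith

theorem sub_mul_snrBound_div_three_nonneg
    (hmono : ∀ k ∈ Icc 1 (K - 1), p (k + 1) ≤ p k) {j : ℕ} (hj : j ∈ Icc 1 (K - 1)) :
    0 ≤ (p j - p (j + 1)) * (snrBound K / 3 * j * (j - 1) * (K - j)) := by
  have hdrop : 0 ≤ p j - p (j + 1) := sub_nonneg.2 (hmono j hj)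
  rw [mem_Icc] at hj
  obtain rfl | hj2 := hj.1.eq_or_lt
  · simp
  · exact mul_nonneg hdrop (snrBound_div_three_mul_pos hj2 (by omega)).le

theorem snrBound_mul_pmfVariance_le_sq_pmfMean (hK : 1 ≤ K) (hp1 : ∑ k ∈ Icc 1 K, p k = 1)
    (hmono : ∀ k ∈ Icc 1 (K - 1), p (k + 1) ≤ p k) :
    snrBound K * pmfVariance p K ≤ pmfMean p K ^ 2 := by
  rw [← sub_nonneg, sq_pmfMean_sub_snrBound_mul_pmfVariance_eq hK hp1]
  have := snrBound_pos K
  exact add_nonneg (by positivity)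
    (sum_nonneg fun j hj => sub_mul_snrBound_div_three_nonneg hmono hj)

theorem snrBound_mul_pmfVariance_eq_sq_pmfMean_iff (hK : 1 ≤ K)
    (hp1 : ∑ k ∈ Icc 1 K, p k = 1) (hmono : ∀ k ∈ Icc 1 (K - 1), p (k + 1) ≤ p k) :
    snrBound K * pmfVariance p K = pmfMean p K ^ 2 ↔
      pmfMean p K = extremalMean K ∧ ∀ k ∈ Icc 2 K, p k = p 2 := by
  have hc : 0 < 1 + snrBound K := by linarith [snrBound_pos K]
  have hterm := fun j (hj : j ∈ Icc 1 (K - 1)) => sub_mul_snrBound_div_three_nonneg hmono hj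
  rw [eq_comm, ← sub_eq_zero, sq_pmfMean_sub_snrBound_mul_pmfVariance_eq hK hp1,
    add_eq_zero_iff_of_nonneg (by positivity) (sum_nonneg hterm),
    sum_eq_zero_iff_of_nonneg hterm, forall_mem_Icc_eq_left_iff]
  refine and_congr (by simp [hc.ne', sub_eq_zero]) ⟨fun h j hj => ?_, fun h j hj => ?_⟩
  · rw [mem_Ico] at hj
    have hpos := snrBound_div_three_mul_pos (K := K) hj.1 hj.2
    have := h j (by simp; omega)
    rw [mul_eq_zero, sub_eq_zero] at this
    exact (this.resolve_right hpos.ne').symm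
  · rw [mem_Icc] at hj
    obtain rfl | hj2 := hj.1.eq_or_lt
    · simp
    · rw [h j (by simp; omega), sub_self, zero_mul]

theorem pmfMean_eq_extremalMean_iff (hK : 2 ≤ K)
    (hp1 : ∑ k ∈ Icc 1 K, p k = 1) {q : ℝ} (hq : ∀ k ∈ Icc 2 K, p k = q) :
    pmfMean p K = extremalMean K ↔
      p 1 = (2 * (K : ℝ) ^ 2 + K + 2) / (2 * (K : ℝ) ^ 2 + 5 * K) ∧
        q = 2 * (2 * (K : ℝ) - 1) / (K * (K - 1) * (2 * K + 5)) := by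
  have hK1 : 1 ≤ K := by omega
  have hmass : p 1 - q + q * K = 1 := by
    have := sum_Icc_one_mul_eq_of_eqOn_Icc_two (fun _ => (1 : ℝ)) p hK1 hq
    simpa [hp1] using this.symm
  have hmean : pmfMean p K = p 1 - q + q * (K * (K + 1) / 2) := by
    rw [pmfMean, sum_Icc_one_mul_eq_of_eqOn_Icc_two _ p hK1 hq, sum_Icc_one_natCast]
    ring
  have hK' : (2 : ℝ) ≤ K := by exact_mod_cast hK
  have h₂ : (K : ℝ) - 1 ≠ 0 := by linarith
  have h₄ : (2 * K ^ 2 + 5 * K : ℝ) ≠ 0 := by positivity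
  rw [hmean, extremalMean]
  constructor
  · intro h
    have h' : (p 1 - q + q * (K * (K + 1) / 2)) * (2 * K + 5) = 4 * (K + 1) := by
      rw [h]
      field_simp
    have hq' : q * (K * (K - 1) * (2 * K + 5)) = 2 * (2 * K - 1) := by
      linear_combination 2 * h' - 2 * (2 * K + 5 : ℝ) * hmass
    refine ⟨?_, (eq_div_iff (by positivity)).2 hq'⟩
    rw [eq_div_iff h₄]
    linear_combination (2 * K ^ 2 + 5 * K : ℝ) * hmass - hq'
  · rintro ⟨h1, rfl⟩
    rw [h1]
    field_simp
    ring

end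

theorem min_snr_nonincreasing_general
    (K : ℕ) (hK : 2 ≤ K) (p : ℕ → ℝ)
    (hp1 : (∑ k ∈ Finset.Icc 1 K, p k) = 1)
    (hmono : ∀ k ∈ Finset.Icc 1 (K - 1), p (k + 1) ≤ p k)
    (hvar : 0 < (∑ k ∈ Finset.Icc 1 K, (k : ℝ) ^ 2 * p k)
        - (∑ k ∈ Finset.Icc 1 K, (k : ℝ) * p k) ^ 2) :
    24 * ((K : ℝ) + 1) / (4 * (K : ℝ) ^ 2 - 4 * (K : ℝ) + 1)
      ≤ (∑ k ∈ Finset.Icc 1 K, (k : ℝ) * p k) ^ 2 /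
          ((∑ k ∈ Finset.Icc 1 K, (k : ℝ) ^ 2 * p k)
            - (∑ k ∈ Finset.Icc 1 K, (k : ℝ) * p k) ^ 2) ∧
    ((∑ k ∈ Finset.Icc 1 K, (k : ℝ) * p k) ^ 2 /
          ((∑ k ∈ Finset.Icc 1 K, (k : ℝ) ^ 2 * p k)
            - (∑ k ∈ Finset.Icc 1 K, (k : ℝ) * p k) ^ 2)
        = 24 * ((K : ℝ) + 1) / (4 * (K : ℝ) ^ 2 - 4 * (K : ℝ) + 1)
      ↔ (p 1 = (2 * (K : ℝ) ^ 2 + (K : ℝ) + 2) / (2 * (K : ℝ) ^ 2 + 5 * (K : ℝ)) ∧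
          ∀ k ∈ Finset.Icc 2 K,
            p k = 2 * (2 * (K : ℝ) - 1) /
              ((K : ℝ) * ((K : ℝ) - 1) * (2 * (K : ℝ) + 5)))) := by
  change 0 < pmfVariance p K at hvar
  change snrBound K ≤ pmfMean p K ^ 2 / pmfVariance p K ∧
    (pmfMean p K ^ 2 / pmfVariance p K = snrBound K ↔ _)
  have hK1 : 1 ≤ K := by omega
  rw [le_div_iff₀ hvar, div_eq_iff hvar.ne', eq_comm,
    snrBound_mul_pmfVariance_eq_sq_pmfMean_iff hK1 hp1 hmono]
  refine ⟨snrBound_mul_pmfVariance_le_sq_pmfMean hK1 hp1 hmono, ⟨?_, ?_⟩⟩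
  · rintro ⟨hmean, htail⟩
    obtain ⟨h1, h2⟩ := (pmfMean_eq_extremalMean_iff hK hp1 htail).1 hmean
    exact ⟨h1, fun k hk => (htail k hk).trans h2⟩
  · rintro ⟨h1, htail⟩
    have h2 : 2 ∈ Icc 2 K := by simpa using hK
    exact ⟨(pmfMean_eq_extremalMean_iff hK hp1 htail).2 ⟨h1, rfl⟩,
      fun k hk => (htail k hk).trans (htail 2 h2).symm⟩

/-- For `K ≥ 2` and any random variable supported on `{1, …, K}`
with non-increasing probability mass function and positive variance,
`SNR(X) = (E X)²/Var(X) ≥ 24(K+1)/(4K² − 4K + 1)`, with equality if and only if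
`P(X = 1) = (2K² + K + 2)/(2K² + 5K)` and
`P(X = k) = 2(2K−1)/(K(K−1)(2K+5))` for every `k ∈ {2, …, K}`. -/
theorem min_snr_nonincreasing
    (K : ℕ) (hK : 2 ≤ K) (p : ℕ → ℝ)
    (hp0 : ∀ k ∈ Finset.Icc 1 K, 0 ≤ p k)
    (hp1 : (∑ k ∈ Finset.Icc 1 K, p k) = 1)
    (hmono : ∀ k ∈ Finset.Icc 1 (K - 1), p (k + 1) ≤ p k)
    (hvar : 0 < (∑ k ∈ Finset.Icc 1 K, (k : ℝ) ^ 2 * p k)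
        - (∑ k ∈ Finset.Icc 1 K, (k : ℝ) * p k) ^ 2) :
    24 * ((K : ℝ) + 1) / (4 * (K : ℝ) ^ 2 - 4 * (K : ℝ) + 1)
      ≤ (∑ k ∈ Finset.Icc 1 K, (k : ℝ) * p k) ^ 2 /
          ((∑ k ∈ Finset.Icc 1 K, (k : ℝ) ^ 2 * p k)
            - (∑ k ∈ Finset.Icc 1 K, (k : ℝ) * p k) ^ 2) ∧
    ((∑ k ∈ Finset.Icc 1 K, (k : ℝ) * p k) ^ 2 /
          ((∑ k ∈ Finset.Icc 1 K, (k : ℝ) ^ 2 * p k)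
            - (∑ k ∈ Finset.Icc 1 K, (k : ℝ) * p k) ^ 2)
        = 24 * ((K : ℝ) + 1) / (4 * (K : ℝ) ^ 2 - 4 * (K : ℝ) + 1)
      ↔ (p 1 = (2 * (K : ℝ) ^ 2 + (K : ℝ) + 2) / (2 * (K : ℝ) ^ 2 + 5 * (K : ℝ)) ∧
          ∀ k ∈ Finset.Icc 2 K,
            p k = 2 * (2 * (K : ℝ) - 1) /
              ((K : ℝ) * ((K : ℝ) - 1) * (2 * (K : ℝ) + 5)))) :=
  min_snr_nonincreasing_general K hK p hp1 hmono hvar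
end
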